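/- Let Ω ⊆ ℝⁿ (n ≥ 2) be a nonempty, open, bounded set and let G ⊆ Ω be Lebesgue-measurable with P_Ω(G) < ∞. Let ξ_k ↘ 0 and let φ_k : Ω → ℝ (k = 1, 2, …) be continuously differentiable with x ↦ |∇φ_k(x)|² and x ↦ W(φ_k(x)) Lebesgue integrable on Ω. Assume φ_k → χ_G almost everywhere in Ω and sup_{k ≥ 1} ∫_Ω [(ξ_k/2)|∇φ_k|² + W(φ_k)/ξ_k] dx < ∞. Define η_k(x) := ∫₀^{φ_k(x)} √(2 W(t)) dt. Then for every continuously differentiable vector field g : Ω → ℝⁿ with compact support in Ω, lim_{k→∞} ∫_Ω ∇η_k · g dx = − ∫_G div g dx. -/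

import Mathlib

open MeasureTheory Filter Topology RealInnerProductSpace

/-- The quartic double-well potential `W(s) = 18 s² (1-s)²`. -/
noncomputable def W (s : ℝ) : ℝ := 18 * s ^ 2 * (1 - s) ^ 2

/-- Divergence of a vector field on `ℝⁿ`. -/
noncomputable def vdiv {n : ℕ} (g : EuclideanSpace ℝ (Fin n) → EuclideanSpace ℝ (Fin n))
    (x : EuclideanSpace ℝ (Fin n)) : ℝ :=
  ∑ i, fderiv ℝ g x (EuclideanSpace.single i 1) i

/-- The set of numbers `∫_G div g` over admissible test vector fields `g` (C¹, compactly
supported in `Ω`, with `|g| ≤ 1`), whose supremum is the perimeter of `G` in `Ω`. -/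
noncomputable def perimSet {n : ℕ} (Ω G : Set (EuclideanSpace ℝ (Fin n))) : Set ℝ :=
  { r | ∃ g : EuclideanSpace ℝ (Fin n) → EuclideanSpace ℝ (Fin n),
      ContDiff ℝ 1 g ∧ HasCompactSupport g ∧ tsupport g ⊆ Ω ∧
      (∀ x, ‖g x‖ ≤ 1) ∧ r = ∫ x in G, vdiv g x }

/-- The perimeter `P_Ω(G)` of `G` in `Ω`. -/
noncomputable def perim {n : ℕ} (Ω G : Set (EuclideanSpace ℝ (Fin n))) : ℝ :=
  sSup (perimSet Ω G)

/-- `η_k(x) = ∫₀^{φ_k(x)} √(2W(t)) dt`. -/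
noncomputable def etaFn {n : ℕ} (φ : ℕ → EuclideanSpace ℝ (Fin n) → ℝ) (k : ℕ)
    (x : EuclideanSpace ℝ (Fin n)) : ℝ :=
  ∫ t in (0 : ℝ)..(φ k x), Real.sqrt (2 * W t)

/-!
Write `F(s) = ∫₀^s √(2W)`, so that `η_k = F ∘ φ_k` and the integrand is `⟪∇η_k, g⟫`.
Integrating by parts against the compactly supported field `g` turns the integral into
`-∫ η_k div g`. The normalisation of `W` gives `F 0 = 0` and `F 1 = 1`, hence `η_k → χ_G`
a.e.; since `|F(s) - χ| ≤ 31 + W(s)` and the energy bound forces `∫ W(φ_k) ≤ C ξ_k → 0`,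
the convergence holds in `L¹` on the support of `g`, so `∫ η_k div g → ∫_G div g`.
-/

lemma W_nonneg (s : ℝ) : 0 ≤ W s := by unfold W; positivity

lemma sqrt_two_mul_W (t : ℝ) : √(2 * W t) = |6 * t * (1 - t)| := by
  rw [show 2 * W t = (6 * t * (1 - t)) ^ 2 by unfold W; ring, Real.sqrt_sq_eq_abs]

lemma continuous_sqrt_two_mul_W : Continuous fun t => √(2 * W t) := by
  unfold W; fun_prop

/-- `etaFn φ k = primitiveSqrtTwoW ∘ φ k`. -/
noncomputable def primitiveSqrtTwoW (s : ℝ) : ℝ := ∫ t in (0 : ℝ)..s, √(2 * W t)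

lemma hasDerivAt_primitiveSqrtTwoW (s : ℝ) :
    HasDerivAt primitiveSqrtTwoW (√(2 * W s)) s :=
  (continuous_sqrt_two_mul_W.integral_hasStrictDerivAt 0 s).hasDerivAt

lemma continuous_primitiveSqrtTwoW : Continuous primitiveSqrtTwoW :=
  continuous_iff_continuousAt.2 fun s => (hasDerivAt_primitiveSqrtTwoW s).continuousAt

lemma primitiveSqrtTwoW_zero : primitiveSqrtTwoW 0 = 0 := by simp [primitiveSqrtTwoW]

lemma primitiveSqrtTwoW_one : primitiveSqrtTwoW 1 = 1 := by
  have h : Set.EqOn (fun t => √(2 * W t)) (fun t => 6 * t - 6 * t ^ 2) (Set.uIcc 0 1) := by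
    intro t ht
    rw [Set.uIcc_of_le zero_le_one] at ht
    dsimp only
    rw [sqrt_two_mul_W, abs_of_nonneg (by nlinarith [ht.1, ht.2])]
    ring
  rw [primitiveSqrtTwoW, intervalIntegral.integral_congr h,
    intervalIntegral.integral_sub (Continuous.intervalIntegrable (by fun_prop) _ _)
      (Continuous.intervalIntegrable (by fun_prop) _ _),
    intervalIntegral.integral_const_mul, intervalIntegral.integral_const_mul]
  norm_num [integral_id]

lemma abs_primitiveSqrtTwoW_le (s : ℝ) : |primitiveSqrtTwoW s| ≤ 30 + W s := by
  have hint : |primitiveSqrtTwoW s| ≤ 6 * |s| * (1 + |s|) * |s - 0| := by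
    rw [← Real.norm_eq_abs, primitiveSqrtTwoW]
    refine intervalIntegral.norm_integral_le_of_norm_le_const fun t ht => ?_
    have ht : |t| ≤ |s| := by
      rcases Set.mem_uIoc.1 ht with h | h
      · rw [abs_of_pos h.1, abs_of_pos (h.1.trans_le h.2)]; exact h.2
      · rw [abs_of_nonpos h.2, abs_of_neg (h.1.trans_le h.2)]; linarith [h.1]
    rw [Real.norm_of_nonneg (Real.sqrt_nonneg _), sqrt_two_mul_W, abs_mul, abs_mul,
      abs_of_pos (by norm_num : (0 : ℝ) < 6)]
    have h1t : |1 - t| ≤ 1 + |s| := (abs_sub _ _).trans (by rw [abs_one]; linarith)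
    gcongr
  have hW : 18 * |s| ^ 2 * (1 - |s|) ^ 2 ≤ W s := by
    unfold W
    rcases abs_cases s with ⟨h, _⟩ | ⟨h, _⟩ <;> rw [h]
    nlinarith
  rw [sub_zero] at hint
  nlinarith [abs_nonneg s, sq_nonneg (|s| - 2), sq_nonneg (|s| * (|s| - 2)), sq_nonneg (|s| - 1)]

lemma contDiff_primitiveSqrtTwoW : ContDiff ℝ 1 primitiveSqrtTwoW := by
  have hderiv : deriv primitiveSqrtTwoW = fun s => √(2 * W s) :=
    funext fun s => (hasDerivAt_primitiveSqrtTwoW s).deriv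
  exact contDiff_one_iff_deriv.2 ⟨fun s => (hasDerivAt_primitiveSqrtTwoW s).differentiableAt,
    hderiv ▸ continuous_sqrt_two_mul_W⟩

lemma ContinuousOn.integrable_mul_of_tsupport_subset {X : Type*} [TopologicalSpace X]
    [T2Space X] [MeasurableSpace X] [OpensMeasurableSpace X] {μ : Measure X}
    [IsFiniteMeasureOnCompacts μ] {U : Set X} {f h : X → ℝ} (hf : ContinuousOn f U)
    (hh : Continuous h) (hhc : HasCompactSupport h) (hhU : tsupport h ⊆ U) :
    Integrable (fun x => f x * h x) μ :=
  ((hf.mono hhU).mul hh.continuousOn).integrableOn_compact hhc.isCompact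
    |>.integrable_of_forall_notMem_eq_zero fun x hx => by
      simp [image_eq_zero_of_notMem_tsupport hx]

section Divergence

variable {n : ℕ}

local notation "E" => EuclideanSpace ℝ (Fin n)

lemma vdiv_eq_zero_of_notMem_tsupport {g : E → E} {x : E} (hx : x ∉ tsupport g) :
    vdiv g x = 0 := by
  simp [vdiv, fderiv_of_notMem_tsupport ℝ hx]

lemma continuous_vdiv {g : E → E} (hg : ContDiff ℝ 1 g) : Continuous (vdiv g) := by
  unfold vdiv
  have := hg.continuous_fderiv one_ne_zero
  fun_prop

lemma apply_eq_sum_apply_single_mul (L : E →L[ℝ] ℝ) (v : E) :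
    L v = ∑ i, L (EuclideanSpace.single i 1) * v i := by
  conv_lhs => rw [← (EuclideanSpace.basisFun (Fin n) ℝ).sum_repr v]
  simp [mul_comm]

theorem integral_mul_vdiv_eq_neg_integral_fderiv_apply {U : Set E} (hU : IsOpen U) {η : E → ℝ}
    (hη : ContDiffOn ℝ 1 η U) {g : E → E} (hg : ContDiff ℝ 1 g) (hgc : HasCompactSupport g)
    (hgU : tsupport g ⊆ U) :
    ∫ x, η x * vdiv g x = -∫ x, fderiv ℝ η x (g x) := by
  set e : Fin n → E := fun i => EuclideanSpace.single i 1
  set gc : Fin n → E → ℝ := fun i x => g x i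
  have hgc_diff (i : Fin n) : ContDiff ℝ 1 (gc i) :=
    (EuclideanSpace.proj i : E →L[ℝ] ℝ).contDiff.comp hg
  have hgc_supp (i : Fin n) : tsupport (gc i) ⊆ U :=
    (tsupport_comp_subset (map_zero (EuclideanSpace.proj i)) g).trans hgU
  have hgc_cpt (i : Fin n) : HasCompactSupport (gc i) :=
    hgc.comp_left (map_zero (EuclideanSpace.proj i))
  have hη_diff {x : E} (hx : x ∈ U) : DifferentiableAt ℝ η x :=
    (hη.differentiableOn one_ne_zero).differentiableAt (hU.mem_nhds hx)
  have hdη (v : E) : ContinuousOn (fun x => fderiv ℝ η x v) U :=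
    ((hη.continuousOn_fderiv_of_isOpen hU le_rfl).clm_apply continuousOn_const)
  have hvdiv (x : E) : vdiv g x = ∑ i, fderiv ℝ (gc i) x (e i) := by
    refine Finset.sum_congr rfl fun i _ => ?_
    have hproj : HasFDerivAt (gc i) ((EuclideanSpace.proj i : E →L[ℝ] ℝ).comp (fderiv ℝ g x)) x :=
      (EuclideanSpace.proj i : E →L[ℝ] ℝ).hasFDerivAt.comp x
        (hg.differentiable one_ne_zero x).hasFDerivAt
    rw [hproj.fderiv]
    rfl
  have hint_left (i : Fin n) : Integrable (fun x => fderiv ℝ η x (e i) * gc i x) :=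
    (hdη (e i)).integrable_mul_of_tsupport_subset (hgc_diff i).continuous (hgc_cpt i)
      (hgc_supp i)
  have hint_right (i : Fin n) : Integrable (fun x => η x * fderiv ℝ (gc i) x (e i)) :=
    hη.continuousOn.integrable_mul_of_tsupport_subset
      (((hgc_diff i).continuous_fderiv one_ne_zero).clm_apply continuous_const)
      ((hgc_cpt i).fderiv_apply ℝ _) ((tsupport_fderiv_apply_subset ℝ _).trans (hgc_supp i))
  have hparts (i : Fin n) :
      ∫ x, η x * fderiv ℝ (gc i) x (e i) = -∫ x, fderiv ℝ η x (e i) * gc i x :=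
    integral_mul_fderiv_eq_neg_fderiv_mul_of_integrable (hint_left i) (hint_right i)
      (hη.continuousOn.integrable_mul_of_tsupport_subset (hgc_diff i).continuous (hgc_cpt i)
        (hgc_supp i))
      (fun x hx => hη_diff (hgc_supp i hx))
      (fun x _ => (hgc_diff i).differentiable one_ne_zero x)
  simp_rw [hvdiv, Finset.mul_sum, apply_eq_sum_apply_single_mul (fderiv ℝ η _) (g _)]
  rw [integral_finsetSum _ fun i _ => hint_right i, integral_finsetSum _ fun i _ => hint_left i,
    ← Finset.sum_neg_distrib]
  exact Finset.sum_congr rfl fun i _ => hparts i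

lemma tsupport_vdiv_subset (g : E → E) : tsupport (vdiv g) ⊆ tsupport g :=
  closure_minimal (fun _ hx => by_contra fun h => hx (vdiv_eq_zero_of_notMem_tsupport h))
    (isClosed_tsupport g)

theorem setIntegral_sqrt_two_mul_W_mul_inner_gradient {Ω : Set E} (hΩ : IsOpen Ω) {φ : E → ℝ}
    (hφ : ContDiffOn ℝ 1 φ Ω) {g : E → E} (hg : ContDiff ℝ 1 g) (hgc : HasCompactSupport g)
    (hgΩ : tsupport g ⊆ Ω) :
    ∫ x in Ω, √(2 * W (φ x)) * ⟪gradient φ x, g x⟫ =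
      -∫ x in Ω, primitiveSqrtTwoW (φ x) * vdiv g x := by
  have hg_out {x} (hx : x ∉ Ω) : g x = 0 := image_eq_zero_of_notMem_tsupport fun h => hx (hgΩ h)
  have hfderiv {x} (hx : x ∈ Ω) : fderiv ℝ (primitiveSqrtTwoW ∘ φ) x (g x) =
      √(2 * W (φ x)) * ⟪gradient φ x, g x⟫ := by
    have hφx := ((hφ.differentiableOn one_ne_zero).differentiableAt (hΩ.mem_nhds hx)).hasFDerivAt
    rw [((hasDerivAt_primitiveSqrtTwoW (φ x)).comp_hasFDerivAt x hφx).fderiv,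
      smul_apply, smul_eq_mul, gradient, InnerProductSpace.toDual_symm_apply]
  calc ∫ x in Ω, √(2 * W (φ x)) * ⟪gradient φ x, g x⟫
      = ∫ x in Ω, fderiv ℝ (primitiveSqrtTwoW ∘ φ) x (g x) :=
        (setIntegral_congr_fun hΩ.measurableSet fun x hx => hfderiv hx).symm
    _ = ∫ x, fderiv ℝ (primitiveSqrtTwoW ∘ φ) x (g x) :=
        setIntegral_eq_integral_of_forall_compl_eq_zero fun x hx => by simp [hg_out hx]
    _ = -∫ x, primitiveSqrtTwoW (φ x) * vdiv g x :=
        neg_eq_iff_eq_neg.1 (integral_mul_vdiv_eq_neg_integral_fderiv_apply hΩ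
          (contDiff_primitiveSqrtTwoW.comp_contDiffOn hφ) hg hgc hgΩ).symm
    _ = -∫ x in Ω, primitiveSqrtTwoW (φ x) * vdiv g x := by
        rw [setIntegral_eq_integral_of_forall_compl_eq_zero fun x hx => by
          simp [vdiv_eq_zero_of_notMem_tsupport fun h => hx (hgΩ h)]]

end Divergence

section L1Convergence

variable {α : Type*} [MeasurableSpace α] {μ : Measure α}

theorem tendsto_lintegral_enorm_sub_of_tendsto_ae_of_abs_sub_le [IsFiniteMeasure μ]
    {f w : ℕ → α → ℝ} {f₀ : α → ℝ} {c : ℝ} (hf : ∀ k, AEStronglyMeasurable (f k) μ)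
    (hlim : ∀ᵐ x ∂μ, Tendsto (fun k => f k x) atTop (𝓝 (f₀ x)))
    (hle : ∀ k x, |f k x - f₀ x| ≤ c + w k x) (hw_nonneg : ∀ k x, 0 ≤ w k x)
    (hw : ∀ k, Integrable (w k) μ) (hw_lim : Tendsto (fun k => ∫ x, w k x ∂μ) atTop (𝓝 0)) :
    Tendsto (fun k => ∫⁻ x, ‖f k x - f₀ x‖ₑ ∂μ) atTop (𝓝 0) := by
  have hf₀ : AEStronglyMeasurable f₀ μ := aestronglyMeasurable_of_tendsto_ae atTop hf hlim
  set H : ℕ → α → ENNReal := fun k x => ‖f k x - f₀ x‖ₑ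
  set C := ENNReal.ofReal c
  -- The part of `H k` below `C` is handled by dominated convergence, the rest by `∫ w k → 0`.
  have hsplit (k : ℕ) (x : α) : H k x ≤ min (H k x) C + ENNReal.ofReal (w k x) := by
    rcases le_total (H k x) C with h | h
    · rw [min_eq_left h]; exact le_self_add
    · rw [min_eq_right h]
      calc H k x = ENNReal.ofReal |f k x - f₀ x| := Real.enorm_eq_ofReal_abs _
        _ ≤ ENNReal.ofReal (c + w k x) := ENNReal.ofReal_le_ofReal (hle k x)
        _ ≤ C + ENNReal.ofReal (w k x) := ENNReal.ofReal_add_le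
  have htrunc : Tendsto (fun k => ∫⁻ x, min (H k x) C ∂μ) atTop (𝓝 0) := by
    have hpt : ∀ᵐ x ∂μ, Tendsto (fun k => min (H k x) C) atTop (𝓝 0) := by
      filter_upwards [hlim] with x hx
      have hH : Tendsto (fun k => H k x) atTop (𝓝 0) := by
        simpa [H, Function.comp_def] using (continuous_enorm.tendsto _).comp (hx.sub_const (f₀ x))
      simpa using hH.min (tendsto_const_nhds (x := C))
    simpa using tendsto_lintegral_of_dominated_convergence' (fun _ => C)
      (fun k => (((hf k).sub hf₀).enorm).min aemeasurable_const)
      (fun k => ae_of_all _ fun x => min_le_right _ _)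
      (by simp [lintegral_const, C, ENNReal.mul_eq_top]) hpt
  have hpot : Tendsto (fun k => ∫⁻ x, ENNReal.ofReal (w k x) ∂μ) atTop (𝓝 0) := by
    simp_rw [← ofReal_integral_eq_lintegral_ofReal (hw _) (ae_of_all _ (hw_nonneg _))]
    simpa using ENNReal.tendsto_ofReal hw_lim
  refine tendsto_of_tendsto_of_tendsto_of_le_of_le tendsto_const_nhds
    (by simpa using htrunc.add hpot) (fun _ => zero_le) fun k => ?_
  calc ∫⁻ x, H k x ∂μ ≤ ∫⁻ x, (min (H k x) C + ENNReal.ofReal (w k x)) ∂μ :=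
        lintegral_mono (hsplit k)
    _ = _ := lintegral_add_left' ((((hf k).sub hf₀).enorm).min aemeasurable_const) _

theorem tendsto_integral_mul_of_tendsto_lintegral_enorm_sub {f : ℕ → α → ℝ} {f₀ h : α → ℝ}
    {M : ℝ} (hf : ∀ k, Integrable (f k) μ) (hf₀ : AEStronglyMeasurable f₀ μ)
    (hh : AEStronglyMeasurable h μ) (hM : ∀ x, ‖h x‖ ≤ M)
    (hL1 : Tendsto (fun k => ∫⁻ x, ‖f k x - f₀ x‖ₑ ∂μ) atTop (𝓝 0)) :
    Tendsto (fun k => ∫ x, f k x * h x ∂μ) atTop (𝓝 (∫ x, f₀ x * h x ∂μ)) := by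
  refine tendsto_integral_of_L1 _ (hf₀.mul hh)
    (Eventually.of_forall fun k => (hf k).mul_bdd hh (ae_of_all _ hM)) ?_
  refine tendsto_of_tendsto_of_tendsto_of_le_of_le tendsto_const_nhds
    (by simpa using ENNReal.Tendsto.mul_const hL1 (Or.inr (ENNReal.ofReal_ne_top (r := M))))
    (fun _ => zero_le) fun k => ?_
  calc ∫⁻ x, ‖f k x * h x - f₀ x * h x‖ₑ ∂μ
      ≤ ∫⁻ x, ‖f k x - f₀ x‖ₑ * ENNReal.ofReal M ∂μ := lintegral_mono fun x => by
        rw [← sub_mul, enorm_mul, ← ofReal_norm (h x)]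
        gcongr
        exact hM x
    _ = (∫⁻ x, ‖f k x - f₀ x‖ₑ ∂μ) * ENNReal.ofReal M :=
        lintegral_mul_const' _ _ ENNReal.ofReal_ne_top

theorem integral_le_mul_of_integral_mul_add_div_le {a b : α → ℝ} {ε C : ℝ} (hε : 0 < ε)
    (ha : Integrable a μ) (ha_nonneg : ∀ x, 0 ≤ a x) (hb : Integrable b μ)
    (hC : ∫ x, (ε / 2 * a x + b x / ε) ∂μ ≤ C) :
    ∫ x, b x ∂μ ≤ C * ε := by
  have hdiv : ∫ x, b x / ε ∂μ ≤ ∫ x, (ε / 2 * a x + b x / ε) ∂μ :=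
    integral_mono (hb.div_const ε) ((ha.const_mul _).add (hb.div_const ε)) fun x =>
      le_add_of_nonneg_left (mul_nonneg (by positivity) (ha_nonneg x))
  rw [integral_div] at hdiv
  exact (div_le_iff₀ hε).1 (hdiv.trans hC)

end L1Convergence

theorem tendsto_setIntegral_primitiveSqrtTwoW_mul {X : Type*} [TopologicalSpace X] [T2Space X]
    [MeasurableSpace X] [OpensMeasurableSpace X] {μ : Measure X} [IsFiniteMeasureOnCompacts μ]
    {Ω G : Set X} (hG : MeasurableSet G) {φ : ℕ → X → ℝ} (hφ : ∀ k, ContinuousOn (φ k) Ω)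
    (hWInt : ∀ k, IntegrableOn (fun x => W (φ k x)) Ω μ)
    (hW : Tendsto (fun k => ∫ x in Ω, W (φ k x) ∂μ) atTop (𝓝 0))
    (hae : ∀ᵐ x ∂(μ.restrict Ω),
      Tendsto (fun k => φ k x) atTop (𝓝 (G.indicator (fun _ => (1 : ℝ)) x)))
    {h : X → ℝ} (hh : Continuous h) (hhc : HasCompactSupport h) (hhΩ : tsupport h ⊆ Ω) :
    Tendsto (fun k => ∫ x in Ω, primitiveSqrtTwoW (φ k x) * h x ∂μ) atTop
      (𝓝 (∫ x in G, h x ∂μ)) := by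
  set K := tsupport h
  set χ := G.indicator (fun _ => (1 : ℝ))
  have : IsFiniteMeasure (μ.restrict K) := isFiniteMeasure_restrict.2 hhc.measure_ne_top
  have hh_out {x} (hx : x ∉ K) : h x = 0 := image_eq_zero_of_notMem_tsupport hx
  have hη (k : ℕ) : IntegrableOn (fun x => primitiveSqrtTwoW (φ k x)) K μ :=
    (continuous_primitiveSqrtTwoW.comp_continuousOn ((hφ k).mono hhΩ)).integrableOn_compact hhc
  have hlim : ∀ᵐ x ∂(μ.restrict K),
      Tendsto (fun k => primitiveSqrtTwoW (φ k x)) atTop (𝓝 (χ x)) := by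
    filter_upwards [ae_restrict_of_ae_restrict_of_subset hhΩ hae] with x hx
    have hχ : primitiveSqrtTwoW (χ x) = χ x := by
      by_cases hxG : x ∈ G <;> simp [χ, hxG, primitiveSqrtTwoW_zero, primitiveSqrtTwoW_one]
    simpa [hχ, Function.comp_def] using (continuous_primitiveSqrtTwoW.tendsto _).comp hx
  have hle (k : ℕ) (x : X) : |primitiveSqrtTwoW (φ k x) - χ x| ≤ 31 + W (φ k x) := by
    have hχ : |χ x| ≤ 1 := by by_cases hxG : x ∈ G <;> simp [χ, hxG]
    linarith [abs_sub (primitiveSqrtTwoW (φ k x)) (χ x), abs_primitiveSqrtTwoW_le (φ k x)]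
  have hWK : Tendsto (fun k => ∫ x in K, W (φ k x) ∂μ) atTop (𝓝 0) :=
    squeeze_zero (fun k => integral_nonneg fun x => W_nonneg _)
      (fun k => setIntegral_mono_set (hWInt k) (ae_of_all _ fun x => W_nonneg _)
        hhΩ.eventuallyLE) hW
  obtain ⟨M, hM⟩ := hh.bounded_above_of_compact_support hhc
  have hconv := tendsto_integral_mul_of_tendsto_lintegral_enorm_sub (fun k => hη k)
    ((measurable_const.indicator hG).aestronglyMeasurable) hh.aestronglyMeasurable hM
    (tendsto_lintegral_enorm_sub_of_tendsto_ae_of_abs_sub_le (fun k => (hη k).aestronglyMeasurable)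
      hlim hle (fun k x => W_nonneg _) (fun k => (hWInt k).mono_set hhΩ) hWK)
  have hΩK (k : ℕ) : ∫ x in Ω, primitiveSqrtTwoW (φ k x) * h x ∂μ =
      ∫ x in K, primitiveSqrtTwoW (φ k x) * h x ∂μ := by
    rw [setIntegral_eq_integral_of_forall_compl_eq_zero fun x hx => by
        simp [hh_out fun h => hx (hhΩ h)],
      setIntegral_eq_integral_of_forall_compl_eq_zero fun x hx => by simp [hh_out hx]]
  have hGK : ∫ x in G, h x ∂μ = ∫ x in K, χ x * h x ∂μ := by
    rw [setIntegral_eq_integral_of_forall_compl_eq_zero (s := K) fun x hx => by simp [hh_out hx],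
      ← integral_indicator hG]
    congr 1 with x
    by_cases hxG : x ∈ G <;> simp [χ, hxG]
  simpa only [hΩK, hGK] using hconv

theorem grad_etaFn_weak_convergence_general {n : ℕ}
    (Ω : Set (EuclideanSpace ℝ (Fin n))) (hΩopen : IsOpen Ω)
    (G : Set (EuclideanSpace ℝ (Fin n))) (hGmeas : MeasurableSet G)
    (ξ : ℕ → ℝ) (hξpos : ∀ k, 0 < ξ k)
    (hξ0 : Tendsto ξ atTop (𝓝 0))
    (φ : ℕ → EuclideanSpace ℝ (Fin n) → ℝ)
    (hφ : ∀ k, ContDiffOn ℝ 1 (φ k) Ω)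
    (hgradInt : ∀ k, IntegrableOn (fun x => ‖gradient (φ k) x‖ ^ 2) Ω)
    (hWInt : ∀ k, IntegrableOn (fun x => W (φ k x)) Ω)
    (hae : ∀ᵐ x ∂(volume.restrict Ω),
      Tendsto (fun k => φ k x) atTop (𝓝 (G.indicator (fun _ => (1 : ℝ)) x)))
    (hsup : ∃ C : ℝ, ∀ k,
      (∫ x in Ω, (ξ k / 2 * ‖gradient (φ k) x‖ ^ 2 + W (φ k x) / ξ k)) ≤ C) :
    ∀ g : EuclideanSpace ℝ (Fin n) → EuclideanSpace ℝ (Fin n),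
      ContDiff ℝ 1 g → HasCompactSupport g → tsupport g ⊆ Ω →
      Tendsto
        (fun k => ∫ x in Ω, Real.sqrt (2 * W (φ k x)) * ⟪gradient (φ k) x, g x⟫)
        atTop (𝓝 (-∫ x in G, vdiv g x)) := by
  intro g hg hgc hgΩ
  obtain ⟨C, hC⟩ := hsup
  have hW : Tendsto (fun k => ∫ x in Ω, W (φ k x)) atTop (𝓝 0) := by
    refine squeeze_zero (fun k => integral_nonneg fun x => W_nonneg _) (fun k =>
      integral_le_mul_of_integral_mul_add_div_le (hξpos k) (hgradInt k) (fun x => by positivity)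
        (hWInt k) (hC k)) ?_
    simpa using hξ0.const_mul C
  simp_rw [setIntegral_sqrt_two_mul_W_mul_inner_gradient hΩopen (hφ _) hg hgc hgΩ]
  exact (tendsto_setIntegral_primitiveSqrtTwoW_mul hGmeas (fun k => (hφ k).continuousOn) hWInt
    hW hae (continuous_vdiv hg) (hgc.mono' (subset_tsupport _ |>.trans (tsupport_vdiv_subset g)))
    ((tsupport_vdiv_subset g).trans hgΩ)).neg

theorem grad_etaFn_weak_convergence {n : ℕ} (hn : 2 ≤ n)
    (Ω : Set (EuclideanSpace ℝ (Fin n))) (hΩne : Ω.Nonempty) (hΩopen : IsOpen Ω)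
    (hΩbdd : Bornology.IsBounded Ω)
    (G : Set (EuclideanSpace ℝ (Fin n))) (hGmeas : MeasurableSet G) (hGΩ : G ⊆ Ω)
    (hPfin : BddAbove (perimSet Ω G))
    (ξ : ℕ → ℝ) (hξpos : ∀ k, 0 < ξ k) (hξanti : StrictAnti ξ)
    (hξ0 : Tendsto ξ atTop (𝓝 0))
    (φ : ℕ → EuclideanSpace ℝ (Fin n) → ℝ)
    (hφ : ∀ k, ContDiffOn ℝ 1 (φ k) Ω)
    (hgradInt : ∀ k, IntegrableOn (fun x => ‖gradient (φ k) x‖ ^ 2) Ω)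
    (hWInt : ∀ k, IntegrableOn (fun x => W (φ k x)) Ω)
    (hae : ∀ᵐ x ∂(volume.restrict Ω),
      Tendsto (fun k => φ k x) atTop (𝓝 (G.indicator (fun _ => (1 : ℝ)) x)))
    (hsup : ∃ C : ℝ, ∀ k,
      (∫ x in Ω, (ξ k / 2 * ‖gradient (φ k) x‖ ^ 2 + W (φ k x) / ξ k)) ≤ C) :
    ∀ g : EuclideanSpace ℝ (Fin n) → EuclideanSpace ℝ (Fin n),
      ContDiff ℝ 1 g → HasCompactSupport g → tsupport g ⊆ Ω →
      Tendsto
        (fun k => ∫ x in Ω, Real.sqrt (2 * W (φ k x)) * ⟪gradient (φ k) x, g x⟫)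
        atTop (𝓝 (-∫ x in G, vdiv g x)) :=
  grad_etaFn_weak_convergence_general Ω hΩopen G hGmeas ξ hξpos hξ0 φ hφ hgradInt hWInt hae hsup
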